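/- Let G be a finite group of order n with identity g₁, and let Θ_G := det((x_{gh⁻¹})_{g,h∈G}) be the group determinant. Then for every g ∈ G with g ≠ g₁, we have D_g Θ_G = 0, where D_g := Σ_{h∈G} x_{g⁻¹h} ∂/∂x_h. -/

import Mathlib

/-!
`D_g` is the derivation determined by `x_a ↦ x_{g⁻¹a}`. Applied entrywise to the group matrix
`M = (x_{ab⁻¹})` it permutes the rows by `a ↦ g⁻¹a`, so by Jacobi's formula
`D_g Θ_G = tr (adj M · P M) = Θ_G · tr P`, where `P` is the permutation matrix of `a ↦ g⁻¹a`.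
For `g ≠ 1` this permutation has no fixed points, so `tr P = 0`.
-/

open MvPolynomial

/-- The Frobenius differential operator `D_g f = ∑_{h ∈ G} x_{g⁻¹ h} ∂f/∂x_h`. -/
noncomputable def Dop {G : Type*} [Group G] [Fintype G] (g : G)
    (f : MvPolynomial G ℂ) : MvPolynomial G ℂ :=
  ∑ h : G, X (g⁻¹ * h) * pderiv h f

/-- The group determinant `Θ_G = det (x_{g h⁻¹})_{g,h ∈ G}`. -/
noncomputable def groupDet (G : Type*) [Group G] [Fintype G] [DecidableEq G] :
    MvPolynomial G ℂ :=
  Matrix.det (Matrix.of fun g h : G => (X (g * h⁻¹) : MvPolynomial G ℂ))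

namespace Derivation

section Prod

variable {R A M : Type*} [CommSemiring R] [CommSemiring A] [AddCommMonoid M] [Algebra R A]
  [Module A M] [Module R M] (D : Derivation R A M)

theorem leibniz_finset_prod {ι : Type*} [DecidableEq ι] (s : Finset ι) (f : ι → A) :
    D (∏ i ∈ s, f i) = ∑ i ∈ s, (∏ j ∈ s.erase i, f j) • D (f i) := by
  induction s using Finset.induction with
  | empty => simp
  | @insert a s ha ih =>
    have herase : ∀ i ∈ s, ∏ j ∈ (insert a s).erase i, f j = f a * ∏ j ∈ s.erase i, f j :=
      fun i hi => by
        rw [Finset.erase_insert_of_ne (ne_of_mem_of_not_mem hi ha).symm,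
          Finset.prod_insert fun h => ha (Finset.mem_of_mem_erase h)]
    rw [Finset.prod_insert ha, leibniz, ih, Finset.sum_insert ha, Finset.erase_insert ha,
      Finset.smul_sum, add_comm]
    exact congrArg _ (Finset.sum_congr rfl fun i hi => by rw [herase i hi, mul_smul])

end Prod

section Det

variable {R A : Type*} [CommSemiring R] [CommRing A] [Algebra R A] (D : Derivation R A A)
  {n : Type*} [DecidableEq n] [Fintype n]

theorem map_det_eq_sum_det_updateCol (M : Matrix n n A) :
    D M.det = ∑ i, (M.updateCol i fun k => D (M k i)).det := by
  have hterm : ∀ σ : Equiv.Perm n, D (σ.sign • ∏ i, M (σ i) i)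
      = ∑ i, σ.sign • ∏ j, M.updateCol i (fun k => D (M k i)) (σ j) j := by
    intro σ
    rw [Units.smul_def, map_zsmul, leibniz_finset_prod, Finset.smul_sum]
    refine Finset.sum_congr rfl fun i _ => ?_
    rw [← Finset.mul_prod_erase _ _ (Finset.mem_univ i), Matrix.updateCol_self, mul_comm,
      smul_eq_mul, Units.smul_def]
    congr 2
    exact Finset.prod_congr rfl fun j hj => (Matrix.updateCol_ne (Finset.ne_of_mem_erase hj)).symm
  simp only [Matrix.det_apply, map_sum, hterm]
  exact Finset.sum_comm

theorem map_det (M : Matrix n n A) : D M.det = (M.adjugate * M.map D).trace := by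
  simp only [map_det_eq_sum_det_updateCol, ← Matrix.cramer_apply,
    Matrix.cramer_eq_adjugate_mulVec, Matrix.trace, Matrix.diag, Matrix.mul_apply,
    Matrix.mulVec, dotProduct, Matrix.map_apply]

end Det

end Derivation

theorem Matrix.trace_adjugate_mul_submatrix_eq_zero {n A : Type*} [DecidableEq n] [Fintype n]
    [CommRing A] (M : Matrix n n A) {σ : n → n} (hσ : ∀ i, σ i ≠ i) :
    (M.adjugate * M.submatrix σ id).trace = 0 := by
  rw [trace_mul_comm, ← submatrix_id_id M.adjugate,
    ← submatrix_mul _ _ _ _ _ Function.bijective_id, mul_adjugate]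
  exact Finset.sum_eq_zero fun i _ => by simp [one_apply_ne (hσ i)]

noncomputable def groupMatrix (G : Type*) [Group G] : Matrix G G (MvPolynomial G ℂ) :=
  Matrix.of fun a b => X (a * b⁻¹)

section GroupMatrix

variable {G : Type*} [Group G] [Fintype G]

theorem groupDet_eq_det_groupMatrix [DecidableEq G] :
    groupDet G = (groupMatrix G).det :=
  rfl

noncomputable def frobeniusDerivation (g : G) :
    Derivation ℂ (MvPolynomial G ℂ) (MvPolynomial G ℂ) :=
  ∑ h, (X (g⁻¹ * h) : MvPolynomial G ℂ) • pderiv h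

theorem coe_frobeniusDerivation (g : G) : ⇑(frobeniusDerivation g) = Dop g := by
  funext f
  rw [frobeniusDerivation, ← Derivation.coeFnAddMonoidHom_apply, map_sum]
  simp [Dop]

theorem frobeniusDerivation_X (g a : G) :
    frobeniusDerivation g (X a) = X (g⁻¹ * a) := by
  rw [coe_frobeniusDerivation, Dop,
    Finset.sum_eq_single a (fun h _ hne => by simp [pderiv_X_of_ne hne.symm]) (by simp)]
  simp

theorem groupMatrix_map_frobeniusDerivation (g : G) :
    (groupMatrix G).map (frobeniusDerivation g) = (groupMatrix G).submatrix (g⁻¹ * ·) id := by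
  ext a b
  simp [groupMatrix, frobeniusDerivation_X, mul_assoc]

end GroupMatrix

theorem Dop_groupDet_eq_zero {G : Type*} [Group G] [Fintype G] [DecidableEq G]
    (g : G) (hg : g ≠ 1) : Dop g (groupDet G) = 0 := by
  rw [groupDet_eq_det_groupMatrix, ← coe_frobeniusDerivation, Derivation.map_det,
    groupMatrix_map_frobeniusDerivation]
  exact Matrix.trace_adjugate_mul_submatrix_eq_zero _ fun a h => hg (by simpa using h)
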